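/- arXiv:math/0403219 — 3 statements merged into one kernel-verified Lean document; each statement's English description precedes it below -/
import Mathlib

section
/- Let G be an abelian group, z₀,…,z_t ∈ G with ord(z₀) = s, and suppose rₙ·z_{n+1} = r_{n+1}·zₙ for 0 ≤ n ≤ t−1 where gcd(rₙ, r_{n+1}) = 1 for each n. Then for 1 ≤ n ≤ t, ord(zₙ) divides lcm{s·r₀, r₁, …, r_{n−1}}. -/
private theorem key_dvd {a b c L R r' : ℕ} (hL : L ≠ 0) (hR : R ≠ 0)
    (haL : a ∣ L) (hbL : b ∣ L) (hcop : Nat.Coprime r' R)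
    (h1 : c ∣ b * R) (h2 : b ∣ a / Nat.gcd a R * r') : c ∣ Nat.lcm L R := by
  have ha : a ≠ 0 := by rintro rfl; exact hL (zero_dvd_iff.mp haL)
  have hb : b ≠ 0 := by rintro rfl; exact hL (zero_dvd_iff.mp hbL)
  have hc : c ≠ 0 := by
    rintro rfl
    exact (mul_ne_zero hb hR) (zero_dvd_iff.mp h1)
  by_cases hr' : r' = 0
  · have hR1 : R = 1 := by
      have := hcop
      rw [hr'] at this
      simpa [Nat.coprime_zero_left] using this
    subst hR1
    rw [mul_one] at h1
    exact (h1.trans hbL).trans (Nat.dvd_lcm_left _ _)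
  have hg : Nat.gcd a R ∣ a := Nat.gcd_dvd_left a R
  have ha' : a / Nat.gcd a R ≠ 0 := by
    intro h
    apply ha
    have := Nat.div_mul_cancel hg
    rw [h, zero_mul] at this
    exact this.symm
  rw [← Nat.factorization_le_iff_dvd hc (Nat.lcm_ne_zero hL hR), Finsupp.le_def]
  intro p
  have h1' := (Nat.factorization_le_iff_dvd hc (mul_ne_zero hb hR)).2 h1
  rw [Nat.factorization_mul hb hR] at h1'
  have h2' := (Nat.factorization_le_iff_dvd hb (mul_ne_zero ha' hr')).2 h2
  rw [Nat.factorization_mul ha' hr', Nat.factorization_div hg,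
    Nat.factorization_gcd ha hR] at h2'
  have haL' := (Nat.factorization_le_iff_dvd ha hL).2 haL
  have hbL' := (Nat.factorization_le_iff_dvd hb hL).2 hbL
  have e1 : c.factorization p ≤ b.factorization p + R.factorization p := by
    simpa using Finsupp.le_def.mp h1' p
  have e2 : b.factorization p ≤
      (a.factorization p - min (a.factorization p) (R.factorization p))
        + r'.factorization p := by
    have := Finsupp.le_def.mp h2' p
    simpa [Finsupp.tsub_apply, Finsupp.inf_apply] using this
  have eaL : a.factorization p ≤ L.factorization p := Finsupp.le_def.mp haL' p
  have ebL : b.factorization p ≤ L.factorization p := Finsupp.le_def.mp hbL' p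
  have elcm : (Nat.lcm L R).factorization p =
      max (L.factorization p) (R.factorization p) := by
    rw [Nat.factorization_lcm hL hR]
    simp [Finsupp.sup_apply]
  rw [elcm]
  by_cases hRp : R.factorization p = 0
  · omega
  · have hpR : p ∣ R := Nat.dvd_of_factorization_pos hRp
    have hr'p : r'.factorization p = 0 := by
      by_contra h
      have hpr' : p ∣ r' := Nat.dvd_of_factorization_pos h
      have : p ∣ Nat.gcd r' R := Nat.dvd_gcd hpr' hpR
      rw [hcop] at this
      rw [Nat.dvd_one.mp this] at h
      exact h (Nat.factorization_eq_zero_of_not_prime r' Nat.not_prime_one)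
    omega

/-- Let `G` be an abelian group, `z₀, …, z_t ∈ G` with `ord(z₀) = s` (finite), and
suppose `rₙ·z_{n+1} = r_{n+1}·zₙ` for `0 ≤ n ≤ t−1`, where `gcd(rₙ, r_{n+1}) = 1`.
Then for `1 ≤ n ≤ t`, `ord(zₙ)` divides `lcm{s·r₀, r₁, …, r_{n−1}}`. -/
theorem order_divides_lcm_of_chain {G : Type*} [AddCommGroup G] (t : ℕ)
    (z : ℕ → G) (r : ℕ → ℤ) (s : ℕ) (hs : 0 < s) (hz0 : addOrderOf (z 0) = s)
    (hrel : ∀ n, n ≤ t - 1 → r n • z (n + 1) = r (n + 1) • z n)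
    (hcop : ∀ n, n ≤ t - 1 → Int.gcd (r n) (r (n + 1)) = 1) :
    ∀ n, 1 ≤ n → n ≤ t →
      addOrderOf (z n) ∣
        Nat.lcm (s * (r 0).natAbs) ((Finset.Ico 1 n).lcm fun i => (r i).natAbs) := by
  set L : ℕ → ℕ :=
    fun n => Nat.lcm (s * (r 0).natAbs) ((Finset.Ico 1 n).lcm fun i => (r i).natAbs)
    with hL
  have hmono : ∀ {m n : ℕ}, m ≤ n → L m ∣ L n := by
    intro m n hmn
    exact Nat.lcm_dvd (Nat.dvd_lcm_left _ _)
      ((Finset.lcm_mono (Finset.Ico_subset_Ico le_rfl hmn)).trans (Nat.dvd_lcm_right _ _))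
  have hdvdr : ∀ {i n : ℕ}, 1 ≤ i → i < n → (r i).natAbs ∣ L n := by
    intro i n h1 h2
    exact (Finset.dvd_lcm (Finset.mem_Ico.mpr ⟨h1, h2⟩)).trans (Nat.dvd_lcm_right _ _)
  have main : ∀ n, n ≤ t → addOrderOf (z n) ∣ L n := by
    intro n
    induction n using Nat.strong_induction_on with
    | _ n ih =>
      intro hn
      match n, hn, ih with
      | 0, hn, ih =>
        rw [hz0]
        exact (dvd_mul_right s _).trans (Nat.dvd_lcm_left _ _)
      | 1, hn, ih =>
        have hs0 : (s : ℤ) • z 0 = 0 := by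
          rw [natCast_zsmul, ← hz0]; exact addOrderOf_nsmul_eq_zero (z 0)
        have h1 : (addOrderOf (z 1) : ℤ) ∣ (s : ℤ) * r 0 := by
          rw [addOrderOf_dvd_iff_zsmul_eq_zero, mul_smul, hrel 0 (Nat.zero_le _),
            smul_comm ((s : ℤ)) (r 1), hs0, smul_zero]
        have h2 : addOrderOf (z 1) ∣ s * (r 0).natAbs := by
          have := Int.natCast_dvd.mp h1
          rwa [Int.natAbs_mul, Int.natAbs_natCast] at this
        exact h2.trans (Nat.dvd_lcm_left _ _)
      | (k + 2), hn, ih =>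
        set a := addOrderOf (z k)
        set b := addOrderOf (z (k + 1))
        set c := addOrderOf (z (k + 2))
        set R := (r (k + 1)).natAbs with hRdef
        set r' := (r k).natAbs with hr'def
        have haL : a ∣ L (k + 1) := (ih k (by omega) (by omega)).trans (hmono (by omega))
        have hbL : b ∣ L (k + 1) := ih (k + 1) (by omega) (by omega)
        have hRL : R ∣ L (k + 2) := hdvdr (by omega) (by omega)
        by_cases hR0 : R = 0
        · have : L (k + 2) = 0 := by
            rw [hR0] at hRL; exact zero_dvd_iff.mp hRL
          rw [this]; exact dvd_zero _
        by_cases hL0 : L (k + 1) = 0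
        · have : L (k + 2) = 0 := by
            have := hmono (show k + 1 ≤ k + 2 by omega)
            rw [hL0] at this; exact zero_dvd_iff.mp this
          rw [this]; exact dvd_zero _
        -- h1 : c ∣ b * R
        have hbz : (b : ℤ) • z (k + 1) = 0 := by
          rw [natCast_zsmul]; exact addOrderOf_nsmul_eq_zero (z (k + 1))
        have h1 : c ∣ b * R := by
          have hz : (c : ℤ) ∣ (b : ℤ) * r (k + 1) := by
            rw [addOrderOf_dvd_iff_zsmul_eq_zero, mul_smul, hrel (k + 1) (by omega),
              smul_comm ((b : ℤ)) (r (k + 2)), hbz, smul_zero]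
          have := Int.natCast_dvd.mp hz
          rwa [Int.natAbs_mul, Int.natAbs_natCast] at this
        -- h2 : b ∣ (a / gcd a R) * r'
        have h2 : b ∣ a / Nat.gcd a R * r' := by
          set g := Nat.gcd a R with hgdef
          set a' := a / g with ha'def
          have haR : a ∣ a' * R := by
            obtain ⟨u, hu⟩ := Nat.gcd_dvd_right a R
            exact ⟨u, by rw [hu, ← mul_assoc, Nat.div_mul_cancel (Nat.gcd_dvd_left a R)]⟩
          have hzk : (a : ℤ) ∣ (a' : ℤ) * r (k + 1) := by
            rw [Int.natCast_dvd, Int.natAbs_mul, Int.natAbs_natCast]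
            exact haR
          have hz : (b : ℤ) ∣ (a' : ℤ) * r k := by
            rw [addOrderOf_dvd_iff_zsmul_eq_zero, mul_smul, hrel k (by omega), ← mul_smul]
            exact addOrderOf_dvd_iff_zsmul_eq_zero.mp hzk
          have := Int.natCast_dvd.mp hz
          rwa [Int.natAbs_mul, Int.natAbs_natCast] at this
        have hcop' : Nat.Coprime r' R := hcop k (by omega)
        exact (key_dvd hL0 hR0 haL hbL hcop' h1 h2).trans
          (Nat.lcm_dvd (hmono (by omega)) hRL)
  intro n _ hn
  exact main n hn
end

section
/- Let G(d,h) = ℤ^V/Λ be the sandpile group of the d-regular tree of depth h (d ≥ 3, h ≥ 1), where Λ is spanned by the rows δᵢ of the reduced Laplacian with δᵢ = d·xᵢ − x_{p(i)} − Σ_{j child of i} x_j for non-leaves i ≠ root, δ₀ = d·x₀ − Σ_{j child of 0} x_j, and δ_ℓ = d·x_ℓ − x_{p(ℓ)} for leaves ℓ. Then the order of the image of the root generator x₀ in G(d,h) equals d·(d−1)^h. -/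
/-!
The reduced Laplacian `L` of the tree is symmetric, so `Λ = L ℤ^V`, and `n x₀ ∈ Λ` exactly when
`n x₀ = L c` for some integer vector `c`. The radial potential `φ v = θ(h - depth v + 1)` satisfies
`L φ = d (d-1)^h x₀`, by the recurrence `d θ(k+1) = θ(k+2) + (d-1) θ(k)` at inner vertices and
`θ(h+1) - θ(h) = (d-1)^h` at the root; this bounds the order from above. Conversely, if `L c`
vanishes off the root, then, working up from the leaves (where `φ = 1`), `c` agrees with an integer
multiple `t φ` on every vertex and its children, since `L c = 0` at a vertex determines `c` at its
parent. At the root this gives `n = t d (d-1)^h`.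
-/

namespace SandpileTree

/-- Vertices of the rooted `d`-regular tree of depth `h`: a depth `n ≤ h` together with
the path of steps from the root, padded with value `0` beyond the depth.
The step out of the root has `d` choices; each later step has `d - 1` choices. -/
def Vert (d h : ℕ) : Type :=
  {p : Fin (h + 1) × (Fin h → Fin d) //
    (∀ i : Fin h, (p.1 : ℕ) ≤ (i : ℕ) → (p.2 i : ℕ) = 0) ∧
    (∀ i : Fin h, 0 < (i : ℕ) → (i : ℕ) < (p.1 : ℕ) → (p.2 i : ℕ) < d - 1)}

instance (d h : ℕ) : DecidableEq (Vert d h) := by unfold Vert; infer_instance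
instance (d h : ℕ) : Fintype (Vert d h) := by unfold Vert; infer_instance

/-- The depth (distance from the root) of a vertex. -/
def depth {d h : ℕ} (v : Vert d h) : ℕ := (v.1.1 : ℕ)

/-- The root of the tree. -/
def root (d h : ℕ) (hd : 0 < d) : Vert d h :=
  ⟨(0, fun _ => ⟨0, hd⟩), by constructor <;> intro i <;> simp⟩

/-- `IsParent i j` means that `i` is the parent of `j` in the rooted tree. -/
def IsParent {d h : ℕ} (i j : Vert d h) : Prop :=
  depth j = depth i + 1 ∧ ∀ k : Fin h, (k : ℕ) < depth i → j.1.2 k = i.1.2 k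

instance {d h : ℕ} (i j : Vert d h) : Decidable (IsParent i j) := by
  unfold IsParent; infer_instance

/-- The row of the reduced Laplacian of the augmented tree corresponding to vertex `i`:
`δ i = d·x_i − x_{parent i} − ∑_{j child of i} x_j` (no parent term for the root, and
no children terms for the leaves, which are attached to the sink by `d-1` edges). -/
def delta (d h : ℕ) (i : Vert d h) : Vert d h → ℤ :=
  (d : ℤ) • Pi.single i 1
    - ∑ j ∈ Finset.univ.filter (fun j => IsParent j i), Pi.single j 1
    - ∑ j ∈ Finset.univ.filter (fun j => IsParent i j), Pi.single j 1

/-- The lattice `Λ ⊆ ℤ^V` spanned by the rows of the reduced Laplacian. -/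
def lat (d h : ℕ) : AddSubgroup (Vert d h → ℤ) :=
  AddSubgroup.closure (Set.range (delta d h))

/-- The sandpile group `G(d,h) = ℤ^V / Λ` of the `d`-regular tree of depth `h`. -/
abbrev SG (d h : ℕ) : Type := (Vert d h → ℤ) ⧸ lat d h

/-- The image `x̄ᵢ` of the standard basis vector `xᵢ` in the sandpile group. -/
def xbar (d h : ℕ) (i : Vert d h) : SG d h :=
  QuotientAddGroup.mk (Pi.single i 1)

/-- `θ(d,n) = ((d-1)^n - 1)/(d-2)`. -/
def theta (d n : ℕ) : ℕ := ((d - 1) ^ n - 1) / (d - 2)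

open Finset

variable {d h : ℕ}

lemma depth_le (v : Vert d h) : depth v ≤ h := Nat.lt_succ_iff.mp v.1.1.isLt

lemma step_eq_zero {v : Vert d h} {i : Fin h} (hi : depth v ≤ i) : (v.1.2 i : ℕ) = 0 :=
  v.2.1 i hi

lemma depth_eq_zero_iff (hd : 0 < d) {v : Vert d h} : depth v = 0 ↔ v = root d h hd := by
  refine ⟨fun hv => Subtype.ext (Prod.ext (Fin.ext hv) (funext fun i => Fin.ext ?_)), ?_⟩
  · exact step_eq_zero (by omega)
  · rintro rfl; rfl

lemma depth_root (hd : 0 < d) : depth (root d h hd) = 0 := rfl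

lemma ne_root_of_depth_pos (hd : 0 < d) {v : Vert d h} (hv : 0 < depth v) : v ≠ root d h hd :=
  fun hr => hv.ne' ((depth_eq_zero_iff hd).mpr hr)

lemma IsParent.depth_eq {p v : Vert d h} (hp : IsParent p v) : depth v = depth p + 1 := hp.1

lemma IsParent.unique {p q v : Vert d h} (hp : IsParent p v) (hq : IsParent q v) : p = q := by
  have hpq : depth p = depth q := by have := hp.1; have := hq.1; omega
  refine Subtype.ext (Prod.ext (Fin.ext hpq) (funext fun k => ?_))
  by_cases hk : (k : ℕ) < depth p
  · exact (hp.2 k hk).symm.trans (hq.2 k (hpq ▸ hk))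
  · exact Fin.ext ((step_eq_zero (by omega)).trans (step_eq_zero (by omega)).symm)

lemma exists_isParent {v : Vert d h} (hv : 0 < depth v) : ∃ p, IsParent p v := by
  refine ⟨⟨(⟨depth v - 1, by have := depth_le v; omega⟩,
    fun i => if (i : ℕ) + 1 < depth v then v.1.2 i else ⟨0, (v.1.2 i).pos⟩), ?_, ?_⟩, ?_, ?_⟩
  · intro i hi
    simp only at hi ⊢
    rw [if_neg (by omega)]
  · intro i hi₀ hi
    simp only at hi ⊢
    rw [if_pos (by omega)]
    exact v.2.2 i hi₀ (by unfold depth at hi; omega)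
  · show depth v = depth v - 1 + 1
    omega
  · intro k hk
    show v.1.2 k = if (k : ℕ) + 1 < depth v then v.1.2 k else _
    change (k : ℕ) < depth v - 1 at hk
    rw [if_pos (by omega)]

def parents (v : Vert d h) : Finset (Vert d h) := univ.filter (fun p => IsParent p v)

def children (v : Vert d h) : Finset (Vert d h) := univ.filter (fun j => IsParent v j)

lemma mem_children {v j : Vert d h} : j ∈ children v ↔ IsParent v j := by
  simp [children]

lemma parents_eq_singleton {p v : Vert d h} (hp : IsParent p v) : parents v = {p} := by
  ext q
  simp only [parents, mem_filter, mem_univ, true_and, mem_singleton]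
  exact ⟨fun hq => hq.unique hp, fun hq => hq ▸ hp⟩

lemma parents_eq_empty {v : Vert d h} (hv : depth v = 0) : parents v = ∅ := by
  ext q
  simp only [parents, mem_filter, mem_univ, true_and, notMem_empty, iff_false]
  intro hq
  have := hq.depth_eq
  omega

lemma children_eq_empty {v : Vert d h} (hv : depth v = h) : children v = ∅ := by
  ext j
  simp only [mem_children, notMem_empty, iff_false]
  intro hj
  have := hj.depth_eq
  have := depth_le j
  omega

def child (v : Vert d h) (hv : depth v < h) (s : Fin d) (hs : depth v = 0 ∨ (s : ℕ) < d - 1) :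
    Vert d h :=
  ⟨(⟨depth v + 1, by omega⟩, fun i => if (i : ℕ) = depth v then s else v.1.2 i), by
    refine ⟨fun i hi => ?_, fun i hi₀ hi => ?_⟩
    · simp only at hi ⊢
      rw [if_neg (by omega)]
      exact step_eq_zero (by omega)
    · simp only at hi ⊢
      split_ifs with hiv
      · omega
      · exact v.2.2 i hi₀ (by unfold depth at hi hiv; omega)⟩

lemma isParent_child (v : Vert d h) (hv : depth v < h) (s : Fin d)
    (hs : depth v = 0 ∨ (s : ℕ) < d - 1) :
    IsParent v (child v hv s hs) :=
  ⟨rfl, fun _ hk => if_neg (Nat.ne_of_lt hk)⟩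

lemma eq_child {v j : Vert d h} (hj : IsParent v j) (hv : depth v < h)
    (hs : depth v = 0 ∨ (j.1.2 ⟨depth v, hv⟩ : ℕ) < d - 1) :
    j = child v hv (j.1.2 ⟨depth v, hv⟩) hs := by
  refine Subtype.ext (Prod.ext (Fin.ext hj.depth_eq) (funext fun k => ?_))
  show j.1.2 k = if (k : ℕ) = depth v then j.1.2 ⟨depth v, hv⟩ else v.1.2 k
  split_ifs with hk
  · exact congrArg j.1.2 (Fin.ext hk)
  · rcases Nat.lt_or_gt_of_ne hk with hk | hk
    · exact hj.2 k hk
    · have := hj.depth_eq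
      exact Fin.ext ((step_eq_zero (by omega)).trans (step_eq_zero (by omega)).symm)

lemma card_children {v : Vert d h} (hv : depth v < h) :
    #(children v) = #{s : Fin d | depth v = 0 ∨ (s : ℕ) < d - 1} := by
  refine card_bij' (fun j _ => j.1.2 ⟨depth v, hv⟩)
    (fun s hs => child v hv s (mem_filter.mp hs).2) (fun j hj => ?_) (fun s _ => ?_)
    (fun j hj => (eq_child (mem_children.mp hj) hv _).symm) (fun s _ => if_pos rfl)
  · rw [mem_children] at hj
    simp only [mem_filter, mem_univ, true_and]
    refine or_iff_not_imp_left.mpr fun h0 => j.2.2 _ (by change 0 < depth v; omega) ?_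
    change depth v < depth j
    rw [hj.depth_eq]
    omega
  · exact mem_children.mpr (isParent_child v hv s _)

lemma children_nonempty (hd : 2 ≤ d) {v : Vert d h} (hv : depth v < h) :
    (children v).Nonempty := by
  rw [← card_pos, card_children hv, card_pos]
  exact ⟨⟨0, by omega⟩, mem_filter.mpr ⟨mem_univ _, Or.inr (by simp only; omega)⟩⟩

lemma card_children_root (hd : 0 < d) (hh : 0 < h) : #(children (root d h hd)) = d := by
  rw [card_children hh]
  simp [depth_root]

lemma card_children_of_pos_depth {v : Vert d h} (h0 : 0 < depth v) (hv : depth v < h) :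
    #(children v) = d - 1 := by
  rw [card_children hv]
  simp only [Nat.pos_iff_ne_zero.mp h0, false_or, Fin.card_filter_val_lt]
  omega

def laplacian (c : Vert d h → ℤ) (v : Vert d h) : ℤ :=
  d * c v - ∑ p ∈ parents v, c p - ∑ j ∈ children v, c j

lemma sum_smul_delta (c : Vert d h → ℤ) : ∑ i, c i • delta d h i = laplacian c := by
  funext v
  have delta_apply (i : Vert d h) :
      delta d h i v = d * (if v = i then 1 else 0) - (if IsParent v i then 1 else 0)
        - (if IsParent i v then 1 else 0) := by
    simp only [delta, Pi.sub_apply, Finset.sum_apply, Pi.smul_apply,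
      Pi.single_apply, smul_eq_mul, Finset.sum_ite_eq, mem_filter, mem_univ, true_and]
  simp only [Finset.sum_apply, Pi.smul_apply, delta_apply, smul_eq_mul, mul_sub,
    Finset.sum_sub_distrib, laplacian, parents, children, Finset.sum_filter, mul_ite, mul_one,
    mul_zero, Finset.sum_ite_eq, mem_univ, if_true]
  ring

lemma mem_lat_iff {x : Vert d h → ℤ} : x ∈ lat d h ↔ ∃ c, laplacian c = x := by
  simp_rw [lat, ← Submodule.span_int_eq_addSubgroupClosure, Submodule.mem_toAddSubgroup,
    Submodule.mem_span_range_iff_exists_fun, sum_smul_delta]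

lemma laplacian_apply_of_isParent (c : Vert d h → ℤ) {p v : Vert d h} (hp : IsParent p v) :
    laplacian c v = d * c v - c p - ∑ j ∈ children v, c j := by
  rw [laplacian, parents_eq_singleton hp, sum_singleton]

lemma laplacian_apply_root (c : Vert d h → ℤ) (hd : 0 < d) :
    laplacian c (root d h hd) = d * c (root d h hd) - ∑ j ∈ children (root d h hd), c j := by
  rw [laplacian, parents_eq_empty rfl, sum_empty, sub_zero]

lemma theta_eq_sum_range (hd : 3 ≤ d) (n : ℕ) : theta d n = ∑ i ∈ range n, (d - 1) ^ i := by
  rw [theta, Nat.geomSum_eq (by omega), show d - 1 - 1 = d - 2 by omega]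

lemma theta_succ (hd : 3 ≤ d) (n : ℕ) : theta d (n + 1) = theta d n + (d - 1) ^ n := by
  simp only [theta_eq_sum_range hd, sum_range_succ]

lemma theta_one (hd : 3 ≤ d) : theta d 1 = 1 := by
  simp [theta_eq_sum_range hd]

lemma theta_two (hd : 3 ≤ d) : theta d 2 = d := by
  rw [theta_eq_sum_range hd, sum_range_succ, sum_range_one, pow_zero, pow_one]
  omega

lemma theta_pos (hd : 3 ≤ d) {n : ℕ} (hn : 0 < n) : 0 < theta d n := by
  obtain ⟨n, rfl⟩ := Nat.exists_eq_add_of_lt hn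
  rw [zero_add, theta_succ hd]
  exact Nat.add_pos_right _ (pow_pos (by omega) _)

lemma mul_theta_succ (hd : 3 ≤ d) (n : ℕ) :
    d * theta d (n + 1) = theta d (n + 2) + (d - 1) * theta d n := by
  rw [theta_succ hd (n + 1), theta_succ hd n, pow_succ]
  obtain ⟨e, rfl⟩ : ∃ e, d = e + 1 := ⟨d - 1, by omega⟩
  simp only [Nat.add_sub_cancel]
  ring

def potential (d h : ℕ) (v : Vert d h) : ℤ := theta d (h - depth v + 1)

lemma sum_children_potential (v : Vert d h) :
    ∑ j ∈ children v, potential d h j = #(children v) * theta d (h - depth v) := by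
  rw [sum_congr rfl fun j hj => ?_, sum_const, nsmul_eq_mul]
  have := (mem_children.mp hj).depth_eq
  have := depth_le j
  rw [potential, show h - depth j + 1 = h - depth v by omega]

lemma laplacian_potential (hd : 3 ≤ d) (hh : 1 ≤ h) :
    laplacian (potential d h) =
      (d * (d - 1) ^ h) • Pi.single (root d h (zero_lt_three.trans_le hd)) 1 := by
  funext v
  rw [Pi.smul_apply, Pi.single_apply]
  rcases Nat.eq_zero_or_pos (depth v) with hv | hv
  · rw [(depth_eq_zero_iff (by omega)).mp hv, laplacian_apply_root, sum_children_potential,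
      card_children_root _ hh, if_pos rfl, potential, depth_root, Nat.sub_zero, theta_succ hd,
      nsmul_eq_mul, mul_one]
    push_cast [Nat.cast_sub (show 1 ≤ d by omega)]
    ring
  obtain ⟨p, hp⟩ := exists_isParent hv
  rw [laplacian_apply_of_isParent _ hp, sum_children_potential,
    if_neg (ne_root_of_depth_pos _ hv), smul_zero, potential, potential]
  have hpv := hp.depth_eq
  rcases (depth_le v).lt_or_eq with hvh | hvh
  · rw [card_children_of_pos_depth hv hvh, show h - depth p + 1 = h - depth v + 2 by omega]
    have := mul_theta_succ hd (h - depth v)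
    zify at this
    linarith
  · rw [children_eq_empty hvh, card_empty, hvh, Nat.sub_self, show h - depth p + 1 = 2 by omega,
      theta_one hd, theta_two hd]
    ring

lemma potential_pos (hd : 3 ≤ d) (v : Vert d h) : 0 < potential d h v :=
  Nat.cast_pos.mpr (theta_pos hd (Nat.succ_pos _))

section Propagation

variable {c : Vert d h → ℤ}

lemma eq_mul_potential_of_isParent (hd : 3 ≤ d) (hh : 1 ≤ h) {v j : Vert d h}
    (hj : IsParent v j) (hcj : laplacian c j = 0) {t : ℤ} (htj : c j = t * potential d h j)
    (ht : ∀ k ∈ children j, c k = t * potential d h k) : c v = t * potential d h v := by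
  have hpot : laplacian (potential d h) j = 0 := by
    rw [laplacian_potential hd hh, Pi.smul_apply,
      Pi.single_eq_of_ne (ne_root_of_depth_pos _ (by rw [hj.depth_eq]; omega)), smul_zero]
  rw [laplacian_apply_of_isParent _ hj] at hcj hpot
  rw [htj, sum_congr rfl ht, ← mul_sum] at hcj
  linear_combination t * hpot - hcj

lemma exists_eq_mul_potential (hd : 3 ≤ d) (hh : 1 ≤ h)
    (hc : ∀ v, 0 < depth v → laplacian c v = 0) (v : Vert d h) :
    ∃ t : ℤ, c v = t * potential d h v ∧ ∀ j ∈ children v, c j = t * potential d h j := by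
  rcases (depth_le v).lt_or_eq with hvh | hvh
  · have key (j) (hj : j ∈ children v) :
        ∃ t : ℤ, c v = t * potential d h v ∧ c j = t * potential d h j := by
      have hvj := mem_children.mp hj
      obtain ⟨t, htj, ht⟩ := exists_eq_mul_potential hd hh hc j
      have hcj : laplacian c j = 0 := hc j (by rw [hvj.depth_eq]; omega)
      exact ⟨t, eq_mul_potential_of_isParent hd hh hvj hcj htj ht, htj⟩
    obtain ⟨j₀, hj₀⟩ := children_nonempty (by omega) hvh
    obtain ⟨t, htv, -⟩ := key j₀ hj₀
    refine ⟨t, htv, fun j hj => ?_⟩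
    obtain ⟨s, hsv, hsj⟩ := key j hj
    rwa [mul_right_cancel₀ (potential_pos hd v).ne' (hsv.symm.trans htv)] at hsj
  · refine ⟨c v, ?_, by simp [children_eq_empty hvh]⟩
    rw [potential, hvh, Nat.sub_self, theta_one hd, Nat.cast_one, mul_one]
termination_by h - depth v
decreasing_by rw [(mem_children.mp hj).depth_eq]; omega

lemma dvd_of_laplacian_eq (hd : 3 ≤ d) (hh : 1 ≤ h) {n : ℕ}
    (hc : laplacian c = n • Pi.single (root d h (zero_lt_three.trans_le hd)) 1) :
    d * (d - 1) ^ h ∣ n := by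
  have harm (v) (hv : 0 < depth v) : laplacian c v = 0 := by
    rw [hc, Pi.smul_apply, Pi.single_eq_of_ne (ne_root_of_depth_pos _ hv), smul_zero]
  have hm := congrFun (laplacian_potential hd hh) (root d h (zero_lt_three.trans_le hd))
  set r := root d h (zero_lt_three.trans_le hd)
  obtain ⟨t, htr, ht⟩ := exists_eq_mul_potential hd hh harm r
  have hn := congrFun hc r
  simp only [Pi.smul_apply, Pi.single_eq_same, nsmul_eq_mul, mul_one] at hn hm
  rw [laplacian_apply_root, htr, sum_congr rfl ht, ← mul_sum] at hn
  rw [laplacian_apply_root] at hm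
  exact Int.natCast_dvd_natCast.mp ⟨t, by linear_combination t * hm - hn⟩

end Propagation

lemma nsmul_single_root_mem_lat_iff (hd : 3 ≤ d) (hh : 1 ≤ h) (n : ℕ) :
    n • Pi.single (root d h (zero_lt_three.trans_le hd)) (1 : ℤ) ∈ lat d h ↔
      d * (d - 1) ^ h ∣ n := by
  refine ⟨fun hn => ?_, ?_⟩
  · obtain ⟨c, hc⟩ := mem_lat_iff.mp hn
    exact dvd_of_laplacian_eq hd hh hc
  · rintro ⟨k, rfl⟩
    rw [mul_nsmul]
    exact AddSubgroup.nsmul_mem _ (mem_lat_iff.mpr ⟨_, laplacian_potential hd hh⟩) k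

end SandpileTree

open SandpileTree

/-- In the sandpile group `G(d,h)` of the `d`-regular tree of depth `h` (`d ≥ 3`, `h ≥ 1`),
the order of the image of the root generator `x₀` equals `d·(d−1)^h`. -/
theorem order_of_root_generator (d h : ℕ) (hd : 3 ≤ d) (hh : 1 ≤ h) :
    addOrderOf (xbar d h (root d h (by omega))) = d * (d - 1) ^ h := by
  refine Nat.dvd_right_iff_eq.mp fun n => ?_
  rw [addOrderOf_dvd_iff_nsmul_eq_zero, xbar, ← QuotientAddGroup.mk_nsmul,
    QuotientAddGroup.eq_zero_iff, nsmul_single_root_mem_lat_iff hd hh]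
end

section
/- In the sandpile group G(d,h) of the d-regular tree of depth h, let ȳₙ := Σ_{i ∈ Sₙ} x̄ᵢ be the sum of the generators over all vertices at depth n (1 ≤ n ≤ h). Then the order of ȳₙ equals (d−1)^{h+1−n}. -/
namespace SandpileTree

open Finset

/-- Geometric sum `Θ(N) = 1 + (d-1) + ... + (d-1)^(N-1)`. -/
def Th (d N : ℕ) : ℕ := ∑ i ∈ Finset.range N, (d - 1) ^ i

lemma Th_zero (d : ℕ) : Th d 0 = 0 := by simp [Th]

lemma Th_one (d : ℕ) : Th d 1 = 1 := by simp [Th]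

lemma Th_succ (d N : ℕ) : Th d (N + 1) = Th d N + (d - 1) ^ N :=
  Finset.sum_range_succ _ _

lemma Th_succ' (d N : ℕ) : Th d (N + 1) = (d - 1) * Th d N + 1 := by
  rw [Th, Finset.sum_range_succ']
  simp [Th, Finset.mul_sum, pow_succ, mul_comm]

variable {d h : ℕ}

/-- Sum of a depth-function over the parents of `v`. -/
lemma parent_sum (hd : 0 < d) (c : ℕ → ℤ) (v : Vert d h) :
    ∑ j ∈ Finset.univ.filter (fun j => IsParent j v), c (depth j)
      = if depth v = 0 then 0 else c (depth v - 1) := by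
  rcases Nat.eq_zero_or_pos (depth v) with hv | hv
  · rw [if_pos hv]
    rw [Finset.filter_eq_empty_iff.mpr, Finset.sum_empty]
    intro j _ hj
    have := hj.1; omega
  · obtain ⟨k, hk⟩ : ∃ k, depth v = k + 1 := ⟨depth v - 1, by omega⟩
    have hkh : k < h := by have := depth_le v; omega
    have hk' : (v.1.1 : ℕ) = k + 1 := hk
    set p : Vert d h :=
      ⟨(⟨k, by omega⟩, fun j => if (j : ℕ) < k then v.1.2 j else ⟨0, hd⟩), by
        constructor
        · intro i hi
          simp only at hi ⊢
          rw [if_neg (by omega)]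
        · intro i hi0 hik
          simp only at hik ⊢
          rw [if_pos hik]
          exact v.2.2 i hi0 (by omega : (i : ℕ) < (v.1.1 : ℕ))⟩ with hp
    have hmem : IsParent p v := by
      constructor
      · show depth v = k + 1; exact hk
      · intro l hl
        show v.1.2 l = if (l : ℕ) < k then v.1.2 l else _
        rw [if_pos (show (l : ℕ) < k from hl)]
    have : Finset.univ.filter (fun j => IsParent j v) = {p} := by
      apply Finset.eq_singleton_iff_unique_mem.mpr
      refine ⟨Finset.mem_filter.mpr ⟨Finset.mem_univ _, hmem⟩, ?_⟩
      intro q hq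
      have hq : IsParent q v := (Finset.mem_filter.mp hq).2
      have hdq : depth q = k := by have := hq.1; omega
      have hdq' : (q.1.1 : ℕ) = k := hdq
      apply Subtype.ext
      apply Prod.ext
      · exact Fin.ext hdq
      · funext l
        by_cases hl : (l : ℕ) < k
        · have := hq.2 l (by rwa [hdq])
          show q.1.2 l = if (l : ℕ) < k then v.1.2 l else _
          rw [if_pos hl, ← this]
        · have h0 : (q.1.2 l : ℕ) = 0 := q.2.1 l (by omega : (q.1.1 : ℕ) ≤ (l : ℕ))
          show q.1.2 l = if (l : ℕ) < k then v.1.2 l else (⟨0, hd⟩ : Fin d)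
          rw [if_neg hl]
          exact Fin.ext h0
    rw [this, Finset.sum_singleton, if_neg (by omega)]
    have : depth p = k := rfl
    rw [this, hk, Nat.add_sub_cancel]

lemma child_card (hd : 3 ≤ d) (v : Vert d h) :
    (Finset.univ.filter (fun j => IsParent v j)).card
      = if depth v = h then 0 else if depth v = 0 then d else d - 1 := by
  have hdpos : 0 < d := by omega
  rcases eq_or_ne (depth v) h with hv | hv
  · rw [if_pos hv, Finset.card_eq_zero, Finset.filter_eq_empty_iff]
    intro j _ hj
    have := depth_le j
    have := hj.1
    omega
  · rw [if_neg hv]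
    have hvh : depth v < h := lt_of_le_of_ne (depth_le v) hv
    have hk' : (v.1.1 : ℕ) = depth v := rfl
    have hcard : (Finset.univ.filter (fun j => IsParent v j)).card
        = (Finset.univ.filter (fun t : Fin d => depth v = 0 ∨ (t : ℕ) < d - 1)).card := by
      refine Finset.card_bij' (fun j _ => j.1.2 ⟨depth v, hvh⟩)
        (fun t ht =>
          (⟨(⟨depth v + 1, by omega⟩,
             fun l => if (l : ℕ) < depth v then v.1.2 l
               else if (l : ℕ) = depth v then t else ⟨0, hdpos⟩), by
            constructor
            · intro l hl
              simp only [Fin.val_mk] at hl ⊢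
              rw [if_neg (by omega), if_neg (by omega)]
            · intro l hl0 hl
              simp only [Fin.val_mk] at hl ⊢
              by_cases hlv : (l : ℕ) < depth v
              · rw [if_pos hlv]
                exact v.2.2 l hl0 (by omega : (l : ℕ) < (v.1.1 : ℕ))
              · have hle : (l : ℕ) = depth v := by omega
                rw [if_neg hlv, if_pos hle]
                have := (Finset.mem_filter.mp ht).2
                rcases this with h0 | hlt
                · omega
                · exact hlt⟩ : Vert d h)) ?_ ?_ ?_ ?_
      · -- maps into allowed set
        intro j hj
        have hj : IsParent v j := (Finset.mem_filter.mp hj).2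
        rcases Nat.eq_zero_or_pos (depth v) with h0 | h0
        · exact Finset.mem_filter.mpr ⟨Finset.mem_univ _, Or.inl h0⟩
        · refine Finset.mem_filter.mpr ⟨Finset.mem_univ _, Or.inr ?_⟩
          have hdj : (j.1.1 : ℕ) = depth v + 1 := hj.1
          exact j.2.2 ⟨depth v, hvh⟩ h0 (by simp [hdj])
      · intro t ht
        exact Finset.mem_filter.mpr ⟨Finset.mem_univ _, by
          constructor
          · show (⟨depth v + 1, by omega⟩ : Fin (h+1)).1 = depth v + 1
            rfl
          · intro l hl
            show (if (l : ℕ) < depth v then v.1.2 l else _) = v.1.2 l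
            rw [if_pos hl]⟩
      · -- left inverse
        intro j hj
        have hj : IsParent v j := (Finset.mem_filter.mp hj).2
        have hdj : (j.1.1 : ℕ) = depth v + 1 := hj.1
        apply Subtype.ext
        apply Prod.ext
        · exact Fin.ext hdj.symm
        · funext l
          by_cases hlv : (l : ℕ) < depth v
          · show (if (l : ℕ) < depth v then v.1.2 l else _) = j.1.2 l
            rw [if_pos hlv]
            exact (hj.2 l hlv).symm
          · by_cases hle : (l : ℕ) = depth v
            · show (if (l : ℕ) < depth v then _ else if (l : ℕ) = depth v then
                  j.1.2 ⟨depth v, hvh⟩ else _) = j.1.2 l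
              rw [if_neg hlv, if_pos hle]
              have hlk : l = ⟨depth v, hvh⟩ := Fin.ext hle
              rw [hlk]
            · show (if (l : ℕ) < depth v then _ else if (l : ℕ) = depth v then _
                  else (⟨0, hdpos⟩ : Fin d)) = j.1.2 l
              rw [if_neg hlv, if_neg hle]
              exact Fin.ext (j.2.1 l (by omega : (j.1.1 : ℕ) ≤ (l : ℕ))).symm
      · -- right inverse
        intro t ht
        show (if (depth v : ℕ) < depth v then _ else if depth v = depth v then t else _) = t
        rw [if_neg (lt_irrefl _), if_pos rfl]
    rw [hcard]
    rcases Nat.eq_zero_or_pos (depth v) with h0 | h0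
    · rw [if_pos h0]
      rw [Finset.filter_true_of_mem (fun t _ => Or.inl h0)]
      simp
    · rw [if_neg (by omega)]
      have : Finset.univ.filter (fun t : Fin d => depth v = 0 ∨ (t : ℕ) < d - 1)
          = Finset.univ.erase ⟨d - 1, by omega⟩ := by
        ext t
        have hval : ((⟨d - 1, by omega⟩ : Fin d) : ℕ) = d - 1 := rfl
        simp only [Finset.mem_filter, Finset.mem_univ, true_and, Finset.mem_erase,
          and_true, Ne, Fin.ext_iff, hval]
        have := t.isLt
        omega
      rw [this, Finset.card_erase_of_mem (Finset.mem_univ _)]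
      simp

/-- Sum of a depth-function over the children of `v`. -/
lemma child_sum (hd : 3 ≤ d) (c : ℕ → ℤ) (v : Vert d h) :
    ∑ j ∈ Finset.univ.filter (fun j => IsParent v j), c (depth j)
      = (if depth v = h then 0 else if depth v = 0 then (d : ℤ) else (d : ℤ) - 1)
          * c (depth v + 1) := by
  have hc : ∀ j ∈ Finset.univ.filter (fun j => IsParent v j),
      c (depth j) = c (depth v + 1) := by
    intro j hj
    rw [(Finset.mem_filter.mp hj).2.1]
  rw [Finset.sum_congr rfl hc, Finset.sum_const, child_card hd v, nsmul_eq_mul]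
  congr 1
  split_ifs <;> omega

lemma delta_apply (i v : Vert d h) :
    delta d h i v = (d : ℤ) * (if v = i then 1 else 0)
      - (if IsParent v i then 1 else 0) - (if IsParent i v then 1 else 0) := by
  simp only [delta, Pi.sub_apply, Pi.smul_apply, Finset.sum_apply, Pi.single_apply,
    smul_eq_mul]
  rw [Finset.sum_ite_eq (Finset.univ.filter (fun j => IsParent j i)) v (fun _ => (1:ℤ)),
    Finset.sum_ite_eq (Finset.univ.filter (fun j => IsParent i j)) v (fun _ => (1:ℤ))]
  simp

lemma delta_symm (i v : Vert d h) : delta d h i v = delta d h v i := by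
  rw [delta_apply, delta_apply]
  by_cases hvi : v = i
  · subst hvi; ring
  · rw [if_neg hvi, if_neg (fun hh : i = v => hvi hh.symm)]; ring

lemma sum_delta_mul (c : Vert d h → ℤ) (i : Vert d h) :
    ∑ v, delta d h i v * c v
      = (d : ℤ) * c i - (∑ j ∈ Finset.univ.filter (fun j => IsParent j i), c j)
          - (∑ j ∈ Finset.univ.filter (fun j => IsParent i j), c j) := by
  simp only [delta_apply, sub_mul, mul_assoc, ite_mul, one_mul, zero_mul, mul_ite, mul_zero]
  rw [Finset.sum_sub_distrib, Finset.sum_sub_distrib]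
  rw [Finset.sum_ite_eq' Finset.univ i (fun v => (d:ℤ) * c v)]
  rw [← Finset.sum_filter, ← Finset.sum_filter]
  simp

/-- The coefficient function. -/
def cf (d h n k : ℕ) : ℤ := (Th d (h + 1 - max k n) : ℤ)

/-- The key computation: the pairing of each Laplacian row with the coefficient vector. -/
lemma eval_delta_cf {n : ℕ} (hd : 3 ≤ d) (hn : 1 ≤ n) (hnh : n ≤ h) (i : Vert d h) :
    ∑ v, delta d h i v * cf d h n (depth v)
      = ((d - 1) ^ (h + 1 - n) : ℕ) * (if depth i = n then 1 else 0) := by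
  rw [sum_delta_mul (fun v => cf d h n (depth v)) i, parent_sum (by omega) _ i,
    child_sum hd _ i]
  have hdl := depth_le i
  have hcast : ((d - 1 : ℕ) : ℤ) = (d : ℤ) - 1 := by omega
  set k := depth i with hk
  unfold cf
  rcases Nat.lt_trichotomy k n with h1 | h1 | h1
  · -- k < n : everything cancels
    rw [if_neg (by omega : ¬ k = n), mul_zero]
    have e1 : max k n = n := by omega
    have e2 : max (k + 1) n = n := by omega
    rcases Nat.eq_zero_or_pos k with h0 | h0
    · rw [if_pos h0, if_neg (by omega : ¬ k = h), if_pos h0, e1, e2]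
      ring
    · have e3 : max (k - 1) n = n := by omega
      rw [if_neg (by omega : ¬ k = 0), if_neg (by omega : ¬ k = h),
        if_neg (by omega : ¬ k = 0), e1, e2, e3]
      ring
  · -- k = n
    rw [if_pos h1, mul_one]
    rw [if_neg (by omega : ¬ k = 0)]
    have e1 : max k n = n := by omega
    have e3 : max (k - 1) n = n := by omega
    rcases eq_or_ne k h with hkh | hkh
    · rw [if_pos hkh, zero_mul, e1, e3]
      have e4 : h + 1 - n = 1 := by omega
      rw [e4, Th_one, pow_one]
      push_cast
      omega
    · rw [if_neg hkh, if_neg (by omega : ¬ k = 0), e1, e3]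
      have e2 : max (k + 1) n = k + 1 := by omega
      rw [e2]
      have e4 : h + 1 - n = (h - n) + 1 := by omega
      have e5 : h + 1 - (k + 1) = h - n := by omega
      rw [e4, e5, Th_succ, pow_succ]
      push_cast [hcast]
      ring
  · -- n < k : telescoping
    rw [if_neg (by omega : ¬ k = n), mul_zero]
    rw [if_neg (by omega : ¬ k = 0)]
    have e1 : max k n = k := by omega
    have e3 : max (k - 1) n = k - 1 := by omega
    rcases eq_or_ne k h with hkh | hkh
    · rw [if_pos hkh, zero_mul, e1, e3]
      have e4 : h + 1 - k = 1 := by omega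
      have e5 : h + 1 - (k - 1) = 2 := by omega
      rw [e4, e5, show Th d 2 = (d - 1) * Th d 1 + 1 from Th_succ' d 1, Th_one]
      push_cast [hcast]
      ring
    · rw [if_neg hkh, if_neg (by omega : ¬ k = 0), e1, e3]
      have e2 : max (k + 1) n = k + 1 := by omega
      rw [e2]
      have e4 : h + 1 - (k - 1) = (h - k) + 2 := by omega
      have e5 : h + 1 - k = (h - k) + 1 := by omega
      have e6 : h + 1 - (k + 1) = h - k := by omega
      rw [e4, e5, e6, Th_succ d ((h - k) + 1), Th_succ d (h - k), pow_succ]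
      push_cast [hcast]
      ring

/-- The number of vertices at depth `n`. -/
lemma card_sphere {n : ℕ} (hd : 3 ≤ d) (hn : 1 ≤ n) (hnh : n ≤ h) :
    (Finset.univ.filter (fun i : Vert d h => depth i = n)).card
      = d * (d - 1) ^ (n - 1) := by
  classical
  have hdpos : 0 < d := by omega
  rw [← Fintype.card_subtype]
  set P : Fin h → Fin d → Prop := fun l x =>
    (n ≤ (l : ℕ) → (x : ℕ) = 0) ∧ (0 < (l : ℕ) → (l : ℕ) < n → (x : ℕ) < d - 1) with hP
  have e : {i : Vert d h // depth i = n} ≃ ∀ l : Fin h, {x : Fin d // P l x} := by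
    refine Equiv.trans ?_ (Equiv.subtypePiEquivPi (p := P))
    refine ⟨fun v => ⟨v.1.1.2, fun l => ⟨?_, ?_⟩⟩,
      fun g => ⟨⟨(⟨n, by omega⟩, g.1), ⟨fun l hl => (g.2 l).1 hl,
        fun l h0 hl => (g.2 l).2 h0 hl⟩⟩, rfl⟩, ?_, ?_⟩
    · intro hl
      exact v.1.2.1 l (by rw [show (v.1.1.1 : ℕ) = n from v.2]; exact hl)
    · intro h0 hl
      exact v.1.2.2 l h0 (by rw [show (v.1.1.1 : ℕ) = n from v.2]; exact hl)
    · intro v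
      apply Subtype.ext
      apply Subtype.ext
      apply Prod.ext
      · exact Fin.ext v.2.symm
      · rfl
    · intro g
      exact Subtype.ext rfl
  rw [Fintype.card_congr e, Fintype.card_pi]
  have hfac : ∀ l : Fin h, Fintype.card {x : Fin d // P l x}
      = if n ≤ (l : ℕ) then 1 else if (l : ℕ) = 0 then d else d - 1 := by
    intro l
    rcases le_or_gt n (l : ℕ) with hl | hl
    · rw [if_pos hl, Fintype.card_eq_one_iff]
      refine ⟨⟨⟨0, hdpos⟩, fun _ => rfl, fun _ _ => (by omega : (0 : ℕ) < d - 1)⟩, ?_⟩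
      intro y
      exact Subtype.ext (Fin.ext (y.2.1 hl))
    · rw [if_neg (by omega)]
      rcases Nat.eq_zero_or_pos (l : ℕ) with h0 | h0
      · rw [if_pos h0]
        have hall : ∀ x : Fin d, P l x :=
          fun x => ⟨fun hc => by omega, fun hc _ => by omega⟩
        rw [Fintype.card_congr (Equiv.subtypeUnivEquiv hall), Fintype.card_fin]
      · rw [if_neg (by omega)]
        have eqv : {x : Fin d // P l x} ≃ Fin (d - 1) :=
          { toFun := fun x => ⟨x.1, x.2.2 h0 hl⟩
            invFun := fun t => ⟨⟨t.1, by have := t.isLt; omega⟩,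
              fun hc => absurd hc (by omega), fun _ _ => t.isLt⟩
            left_inv := fun x => Subtype.ext rfl
            right_inv := fun t => rfl }
        rw [Fintype.card_congr eqv, Fintype.card_fin]
  rw [Finset.prod_congr rfl (fun l _ => hfac l)]
  rw [Fin.prod_univ_eq_prod_range
    (fun l => if n ≤ l then 1 else if l = 0 then d else d - 1) h]
  have hsub : Finset.range n ⊆ Finset.range h := by
    intro x hx
    simp only [Finset.mem_range] at hx ⊢
    omega
  rw [← Finset.prod_subset hsub (by
    intro x _ hx2
    simp only [Finset.mem_range] at hx2
    rw [if_pos (by omega)])]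
  obtain ⟨m0, hm0⟩ : ∃ m0, n = m0 + 1 := ⟨n - 1, by omega⟩
  rw [hm0, Finset.prod_range_succ']
  rw [if_neg (by omega), if_pos rfl]
  rw [Finset.prod_congr rfl (fun x hx => by
    simp only [Finset.mem_range] at hx
    rw [if_neg (by omega), if_neg (by omega)])]
  rw [Finset.prod_const, Finset.card_range, mul_comm, Nat.add_sub_cancel]

/-- The pairing homomorphism. -/
def psi (d h : ℕ) (c : ℕ → ℤ) : (Vert d h → ℤ) →+ ℤ where
  toFun x := ∑ v, x v * c (depth v)
  map_zero' := by simp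
  map_add' x y := by
    simp [add_mul, Finset.sum_add_distrib]

lemma psi_single (c : ℕ → ℤ) (i : Vert d h) :
    psi d h c (Pi.single i 1) = c (depth i) := by
  have : psi d h c (Pi.single i 1)
      = ∑ v, (Pi.single i 1 : Vert d h → ℤ) v * c (depth v) := rfl
  rw [this]
  simp only [Pi.single_apply, ite_mul, one_mul, zero_mul]
  rw [Finset.sum_ite_eq' Finset.univ i (fun v => c (depth v))]
  simp

/-- `(d-1)^(h+1-n) • yₙ` lies in the lattice. -/
lemma wmem {n : ℕ} (hd : 3 ≤ d) (hn : 1 ≤ n) (hnh : n ≤ h) :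
    (((d - 1) ^ (h + 1 - n) : ℕ) : ℤ) •
        (∑ i ∈ Finset.univ.filter (fun i : Vert d h => depth i = n), Pi.single i (1 : ℤ))
      ∈ lat d h := by
  have key : (((d - 1) ^ (h + 1 - n) : ℕ) : ℤ) •
        (∑ i ∈ Finset.univ.filter (fun i : Vert d h => depth i = n), Pi.single i (1 : ℤ))
      = ∑ i : Vert d h, cf d h n (depth i) • delta d h i := by
    funext v
    rw [Pi.smul_apply, Finset.sum_apply, Finset.sum_apply]
    have hR : ∀ i : Vert d h, (cf d h n (depth i) • delta d h i) v
        = delta d h v i * cf d h n (depth i) := by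
      intro i
      rw [Pi.smul_apply, smul_eq_mul, delta_symm i v, mul_comm]
    rw [Finset.sum_congr rfl (fun i _ => hR i), eval_delta_cf hd hn hnh v]
    simp only [Pi.single_apply, smul_eq_mul]
    rw [Finset.sum_ite_eq (Finset.univ.filter fun i : Vert d h => depth i = n) v
      (fun _ => (1 : ℤ))]
    simp [Finset.mem_filter]
  rw [key]
  exact sum_mem (fun i _ =>
    AddSubgroup.zsmul_mem _ (AddSubgroup.subset_closure (Set.mem_range_self i)) _)

end SandpileTree

open SandpileTree

/-- In the sandpile group `G(d,h)` of the `d`-regular tree of depth `h` (`d ≥ 3`), the sum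
`ȳₙ = ∑_{i ∈ Sₙ} x̄ᵢ` of the generators over all vertices at depth `n` (`1 ≤ n ≤ h`)
has order `(d−1)^{h+1−n}`. -/
theorem order_of_sphere_sum (d h n : ℕ) (hd : 3 ≤ d) (hn : 1 ≤ n) (hnh : n ≤ h) :
    addOrderOf (∑ i ∈ Finset.univ.filter (fun i : Vert d h => depth i = n), xbar d h i) =
      (d - 1) ^ (h + 1 - n) := by
  classical
  have hdpos : 0 < d := by omega
  set m : ℕ := (d - 1) ^ (h + 1 - n) with hm
  set Y : Vert d h → ℤ :=
    ∑ i ∈ Finset.univ.filter (fun i : Vert d h => depth i = n), Pi.single i (1 : ℤ) with hY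
  have hy : (∑ i ∈ Finset.univ.filter (fun i : Vert d h => depth i = n), xbar d h i)
      = QuotientAddGroup.mk' (lat d h) Y := by
    rw [map_sum]; rfl
  rw [hy]
  -- upper bound
  have hupper : m • QuotientAddGroup.mk' (lat d h) Y = 0 := by
    rw [← map_nsmul, QuotientAddGroup.mk'_apply, QuotientAddGroup.eq_zero_iff,
      ← natCast_zsmul]
    exact wmem hd hn hnh
  have h1 : addOrderOf (QuotientAddGroup.mk' (lat d h) Y) ∣ m :=
    addOrderOf_dvd_of_nsmul_eq_zero hupper
  -- lower bound via homomorphism to ZMod ((d-1)^h)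
  set M : ℕ := (d - 1) ^ h with hM
  have hMne : M ≠ 0 := pow_ne_zero _ (by omega)
  set φ : (Vert d h → ℤ) →+ ZMod M :=
    (Int.castAddHom (ZMod M)).comp (psi d h (cf d h 1)) with hφ
  have hker : lat d h ≤ φ.ker := by
    rw [lat, AddSubgroup.closure_le]
    rintro _ ⟨i, rfl⟩
    rw [SetLike.mem_coe, AddMonoidHom.mem_ker, hφ, AddMonoidHom.comp_apply]
    have hps : psi d h (cf d h 1) (delta d h i)
        = ∑ v, delta d h i v * cf d h 1 (depth v) := rfl
    rw [hps, eval_delta_cf hd le_rfl (le_trans hn hnh) i, Int.coe_castAddHom]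
    have h11 : h + 1 - 1 = h := by omega
    rw [h11]
    by_cases hi : depth i = 1
    · rw [if_pos hi, mul_one]
      show ((((d - 1) ^ h : ℕ) : ℤ) : ZMod M) = 0
      rw [Int.cast_natCast, ← hM, ZMod.natCast_self]
    · rw [if_neg hi, mul_zero]
      show ((0 : ℤ) : ZMod M) = 0
      exact Int.cast_zero
  set φbar : SG d h →+ ZMod M := QuotientAddGroup.lift (lat d h) φ hker with hφbar
  have hval : φbar (QuotientAddGroup.mk' (lat d h) Y)
      = ((d * (d - 1) ^ (n - 1) * Th d (h + 1 - n) : ℕ) : ZMod M) := by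
    rw [hφbar, QuotientAddGroup.mk'_apply, QuotientAddGroup.lift_mk]
    rw [hφ, AddMonoidHom.coe_comp, Function.comp_apply, hY, map_sum]
    have : ∀ i ∈ Finset.univ.filter (fun i : Vert d h => depth i = n),
        psi d h (cf d h 1) (Pi.single i 1) = (Th d (h + 1 - n) : ℤ) := by
      intro i hi
      rw [psi_single]
      have : depth i = n := (Finset.mem_filter.mp hi).2
      rw [this]
      simp [cf, Nat.max_eq_left hn]
    rw [Finset.sum_congr rfl this, Finset.sum_const, card_sphere hd hn hnh]
    rw [nsmul_eq_mul]
    show ((((d * (d - 1) ^ (n - 1) : ℕ) : ℤ) * (Th d (h + 1 - n) : ℤ) : ℤ) : ZMod M) = _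
    push_cast
    ring
  have horder : addOrderOf (φbar (QuotientAddGroup.mk' (lat d h) Y)) = m := by
    rw [hval, ZMod.addOrderOf_coe _ hMne]
    have hTh : Nat.Coprime (d - 1) (d * Th d (h + 1 - n)) := by
      have hc1 : Nat.Coprime (d - 1) d := by
        obtain ⟨e, he⟩ : ∃ e, d = e + 1 := ⟨d - 1, by omega⟩
        have hmod : d % (d - 1) = 1 := by
          rw [he, Nat.add_sub_cancel, Nat.add_mod_left]
          exact Nat.mod_eq_of_lt (by omega)
        rw [Nat.Coprime, Nat.gcd_rec, hmod, Nat.gcd_one_left]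
      have hc2 : Nat.Coprime (d - 1) (Th d (h + 1 - n)) := by
        obtain ⟨N, hN⟩ : ∃ N, h + 1 - n = N + 1 := ⟨h - n, by omega⟩
        rw [hN, Th_succ']
        have hre : (d - 1) * Th d N + 1 = 1 + Th d N * (d - 1) := by ring
        rw [Nat.Coprime, hre, Nat.gcd_add_mul_right_right, Nat.gcd_one_right]
      exact hc1.mul_right hc2
    have hgcd : M.gcd (d * (d - 1) ^ (n - 1) * Th d (h + 1 - n)) = (d - 1) ^ (n - 1) := by
      have e1 : M = (d - 1) ^ (n - 1) * (d - 1) ^ (h + 1 - n) := by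
        rw [hM, ← pow_add]
        congr 1
        omega
      have e2 : d * (d - 1) ^ (n - 1) * Th d (h + 1 - n)
          = (d - 1) ^ (n - 1) * (d * Th d (h + 1 - n)) := by ring
      rw [e1, e2, Nat.gcd_mul_left, Nat.Coprime.pow_left _ hTh, mul_one]
    have e3 : M = (d - 1) ^ (n - 1) * (d - 1) ^ (h + 1 - n) := by
      rw [hM, ← pow_add]
      congr 1
      omega
    rw [hgcd, e3, Nat.mul_div_cancel_left _ (pow_pos (by omega : 0 < d - 1) _)]
  have h2 : m ∣ addOrderOf (QuotientAddGroup.mk' (lat d h) Y) := by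
    rw [← horder]
    apply addOrderOf_dvd_of_nsmul_eq_zero
    rw [← map_nsmul, addOrderOf_nsmul_eq_zero, map_zero]
  exact Nat.dvd_antisymm h1 h2
end
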